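/- Fix reals p^rated ≥ 0, η ≥ 0, Δt ≥ 0, natural numbers t_a < t_d, and reals e^pneed, e^pmax with 0 ≤ e^pneed ≤ e^pmax = p^rated·η·(t_d − t_a)·Δt. Define e^{p+} : ℕ → ℝ by e^{p+}(τ) = 0 for τ ≤ t_a, e^{p+}(τ) = min(e^{p+}(τ−1) + p^rated·η·Δt, e^pmax) for t_a < τ ≤ t_d, and e^{p+}(τ) = e^pmax for τ > t_d; define e^{p−} : ℕ → ℝ by e^{p−}(τ) = 0 for τ ≤ t_a, e^{p−}(τ) = max(0, e^pneed − p^rated·η·(t_d − τ)·Δt) for t_a < τ ≤ t_d, and e^{p−}(τ) = e^pneed for τ > t_d. Then e^{p−}(τ) ≤ e^{p+}(τ) for every τ, i.e. the plug-in energy boundaries are consistent (the feasible envelope is nonempty). -/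
import Mathlib


/-- Consistency of the plug-in energy boundaries: the lower boundary `e^{p−}` never
exceeds the upper boundary `e^{p+}`, so the feasible plug-in energy envelope is
nonempty. -/
theorem plugin_energy_boundaries_consistent
    (prated η Δt : ℝ) (hp : 0 ≤ prated) (hη : 0 ≤ η) (hΔt : 0 ≤ Δt)
    (ta td : ℕ) (htatd : ta < td)
    (epneed epmax : ℝ) (hneed_nonneg : 0 ≤ epneed) (hneed_le : epneed ≤ epmax)
    (hepmax : epmax = prated * η * ((td - ta : ℕ) : ℝ) * Δt)
    (Eplus : ℕ → ℝ)
    (hEp_before : ∀ τ : ℕ, τ ≤ ta → Eplus τ = 0)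
    (hEp_mid : ∀ τ : ℕ, ta < τ → τ ≤ td →
      Eplus τ = min (Eplus (τ - 1) + prated * η * Δt) epmax)
    (hEp_after : ∀ τ : ℕ, td < τ → Eplus τ = epmax)
    (Eminus : ℕ → ℝ)
    (hEm_before : ∀ τ : ℕ, τ ≤ ta → Eminus τ = 0)
    (hEm_mid : ∀ τ : ℕ, ta < τ → τ ≤ td →
      Eminus τ = max 0 (epneed - prated * η * ((td - τ : ℕ) : ℝ) * Δt))
    (hEm_after : ∀ τ : ℕ, td < τ → Eminus τ = epneed) :
    ∀ τ : ℕ, Eminus τ ≤ Eplus τ := by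
  set c : ℝ := prated * η * Δt with hc
  have hcnn : 0 ≤ c := by positivity
  have hmaxnn : 0 ≤ epmax := le_trans hneed_nonneg hneed_le
  -- closed form for Eplus in the middle region
  have key : ∀ τ : ℕ, ta < τ → τ ≤ td →
      Eplus τ = min (c * ((τ - ta : ℕ) : ℝ)) epmax := by
    intro τ
    induction τ with
    | zero => intro h; omega
    | succ n ih =>
      intro h1 h2
      rw [hEp_mid (n + 1) h1 h2, Nat.add_sub_cancel]
      by_cases hn : ta < n
      · rw [ih hn (by omega)]
        have hcast : ((n + 1 - ta : ℕ) : ℝ) = ((n - ta : ℕ) : ℝ) + 1 := by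
          have : n + 1 - ta = (n - ta) + 1 := by omega
          rw [this]; push_cast; ring
        rw [hcast]
        rcases le_total (c * ((n - ta : ℕ) : ℝ)) epmax with h | h
        · rw [min_eq_left h]; ring_nf
        · rw [min_eq_right h]
          have h1' : epmax ≤ c * ((n - ta : ℕ) : ℝ) + c := by linarith
          have h2' : epmax ≤ epmax + c := by linarith
          rw [min_eq_right h2', eq_comm, min_eq_right]
          nlinarith
      · have hta : n = ta := by omega
        rw [hta, hEp_before ta le_rfl]
        have h1c : ((ta + 1 - ta : ℕ) : ℝ) = 1 := by
          have : ta + 1 - ta = 1 := by omega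
          rw [this]; norm_num
        rw [h1c]
        ring_nf
  intro τ
  rcases le_or_gt τ ta with h | h
  · rw [hEm_before τ h, hEp_before τ h]
  · rcases le_or_gt τ td with h2 | h2
    · rw [hEm_mid τ h h2, key τ h h2]
      apply max_le
      · exact le_min (by positivity) hmaxnn
      · apply le_min
        · have hsplit : ((td - ta : ℕ) : ℝ) = ((td - τ : ℕ) : ℝ) + ((τ - ta : ℕ) : ℝ) := by
            have : td - ta = (td - τ) + (τ - ta) := by omega
            rw [this]; push_cast; ring
          have hmax' : epmax = c * ((td - τ : ℕ) : ℝ) + c * ((τ - ta : ℕ) : ℝ) := by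
            rw [hepmax, hsplit, hc]; ring
          nlinarith
        · have : 0 ≤ prated * η * ((td - τ : ℕ) : ℝ) * Δt := by positivity
          linarith
    · rw [hEm_after τ h2, hEp_after τ h2]; exact hneed_le
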